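/- Let d and i be natural numbers with 2i ≤ d, let k = ((i, d−2i)) be the order-1 Fibonacci index of degree d, and let ℓ be any Fibonacci index of degree d. Then k ≤ ℓ in the singularity partial order if and only if the word (C,D)^ℓ contains exactly i occurrences of the letter D (equivalently, the D-count Σ i_n + r of ℓ equals i). -/
import Mathlib


/-- The two-letter alphabet. -/
inductive Letter : Type
  | C : Letter
  | D : Letter
deriving DecidableEq, Repr

open Letter

/-- The block `D^i C^j` corresponding to a pair `(i, j)`. -/
def block (p : ℕ × ℕ) : List Letter :=
  List.replicate p.1 D ++ List.replicate p.2 C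

/-- A Fibonacci index is a nonempty list `k : List (ℕ × ℕ)`; the word `(C,D)^k`
is `D^{i_0}C^{j_0} ++ [C,D] ++ … ++ [C,D] ++ D^{i_r}C^{j_r}`. -/
def cdWord (k : List (ℕ × ℕ)) : List Letter :=
  List.intercalate [C, D] (k.map block)

/-- The degree `2·Σ i_n + Σ j_n + 3r` of a Fibonacci index of order `r + 1`. -/
def degree (k : List (ℕ × ℕ)) : ℕ :=
  2 * (k.map Prod.fst).sum + (k.map Prod.snd).sum + 3 * (k.length - 1)

/-- The generating relations of the singularity partial order: shifting,
splitting, and concatenation (`x`, `y` may be empty). -/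
inductive SingStep : List (ℕ × ℕ) → List (ℕ × ℕ) → Prop
  | shift (a b c d : ℕ) : SingStep [(a, c), (b, d + 1)] [(a, c + 1), (b, d)]
  | split (a b c : ℕ) : SingStep [(a + b + 1, c + 1)] [(a, 0), (b, c)]
  | concat (x y : List (ℕ × ℕ)) {u v : List (ℕ × ℕ)} :
      SingStep u v → SingStep (x ++ u ++ y) (x ++ v ++ y)

/-- The singularity partial order: reflexive–transitive closure of `SingStep`. -/
def SingLE (u v : List (ℕ × ℕ)) : Prop := Relation.ReflTransGen SingStep u v

def Dsum (l : List (ℕ × ℕ)) : ℕ := (l.map Prod.fst).sum + l.length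
def Deg (l : List (ℕ × ℕ)) : ℕ :=
  2 * (l.map Prod.fst).sum + (l.map Prod.snd).sum + 3 * l.length

lemma Dsum_append (x y : List (ℕ × ℕ)) : Dsum (x ++ y) = Dsum x + Dsum y := by
  simp [Dsum]; ring

lemma Deg_append (x y : List (ℕ × ℕ)) : Deg (x ++ y) = Deg x + Deg y := by
  simp [Deg]; ring

lemma SingStep.dsum {u v : List (ℕ × ℕ)} (h : SingStep u v) : Dsum u = Dsum v := by
  induction h with
  | shift a b c d => simp [Dsum] <;> omega
  | split a b c => simp [Dsum] <;> omega
  | concat x y _ ih => simp [Dsum_append, ih]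

lemma SingStep.deg {u v : List (ℕ × ℕ)} (h : SingStep u v) : Deg u = Deg v := by
  induction h with
  | shift a b c d => simp [Deg] <;> omega
  | split a b c => simp [Deg] <;> omega
  | concat x y _ ih => simp [Deg_append, ih]

lemma SingLE.dsum {u v : List (ℕ × ℕ)} (h : SingLE u v) : Dsum u = Dsum v := by
  induction h with
  | refl => rfl
  | tail _ h ih => exact ih.trans h.dsum

lemma cdWord_cons_cons (p q : ℕ × ℕ) (l : List (ℕ × ℕ)) :
    cdWord (p :: q :: l) = block p ++ [C, D] ++ cdWord (q :: l) := by
  simp [cdWord, List.intercalate, List.intersperse]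

lemma count_block (p : ℕ × ℕ) : (block p).count D = p.1 := by
  simp [block, List.count_replicate]

lemma count_cdWord : ∀ l : List (ℕ × ℕ), l ≠ [] → (cdWord l).count D + 1 = Dsum l
  | [p], _ => by simp [cdWord, List.intercalate, List.intersperse, block, List.count_replicate, Dsum]
  | p :: q :: l, _ => by
    have ih := count_cdWord (q :: l) (by simp)
    rw [cdWord_cons_cons]
    simp only [List.count_append, count_block]
    simp [Dsum] at ih ⊢
    omega

lemma SingLE.concat (x y : List (ℕ × ℕ)) {u v : List (ℕ × ℕ)} (h : SingLE u v) :
    SingLE (x ++ u ++ y) (x ++ v ++ y) := by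
  induction h with
  | refl => exact Relation.ReflTransGen.refl
  | tail _ h ih => exact ih.tail (SingStep.concat x y h)

lemma shifts (a b e : ℕ) : ∀ m c, SingLE [(a, c), (b, e + m)] [(a, c + m), (b, e)] := by
  intro m
  induction m with
  | zero => intro c; exact Relation.ReflTransGen.refl
  | succ m ih =>
    intro c
    have h1 : SingStep [(a, c), (b, (e + m) + 1)] [(a, c + 1), (b, e + m)] :=
      SingStep.shift a b c (e + m)
    have := (Relation.ReflTransGen.single h1).trans (ih (c + 1))
    have e1 : e + (m + 1) = (e + m) + 1 := by omega
    have e2 : c + (m + 1) = (c + 1) + m := by omega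
    rw [e1, e2]
    exact this

lemma build : ∀ l : List (ℕ × ℕ), l ≠ [] → ∀ i j : ℕ,
    Dsum l = i + 1 → Deg l = 2 * (i + 1) + j + 1 → SingLE [(i, j)] l
  | [p], _, i, j, h1, h2 => by
    have hp1 : p.1 = i := by simp [Dsum] at h1; omega
    have hp2 : p.2 = j := by simp [Deg] at h2; omega
    have : [((i : ℕ), (j : ℕ))] = [p] := by
      rw [← hp1, ← hp2]
    rw [this]
    exact Relation.ReflTransGen.refl
  | p :: q :: l, _, i, j, h1, h2 => by
    set l' := q :: l with hl'
    have hDsum : Dsum (p :: l') = p.1 + 1 + Dsum l' := by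
      rw [show p :: l' = [p] ++ l' from rfl, Dsum_append]; simp [Dsum]
    have hDeg : Deg (p :: l') = 2 * p.1 + p.2 + 3 + Deg l' := by
      rw [show p :: l' = [p] ++ l' from rfl, Deg_append]; simp [Deg]
    have hlen : 1 ≤ l'.length := by simp [l']
    have hfst : (l'.map Prod.fst).sum + l'.length = Dsum l' := rfl
    have hdegl' : Deg l' = 2 * (l'.map Prod.fst).sum + (l'.map Prod.snd).sum
        + 3 * l'.length := rfl
    -- derived facts
    have hi : p.1 + 1 ≤ i := by
      have : 1 ≤ Dsum l' := by simp [Dsum, l']; omega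
      omega
    set i' := i - p.1 - 1 with hi'
    have hDsuml' : Dsum l' = i' + 1 := by omega
    have hj : p.2 + 1 ≤ j := by omega
    set j' := j - p.2 - 1 with hj'
    have hDegl' : Deg l' = 2 * (i' + 1) + j' + 1 := by omega
    have ih : SingLE [(i', j')] l' := build l' (by simp [l']) i' j' hDsuml' hDegl'
    -- split step: [(i, j)] → [(p.1, 0), (i', j - 1)]
    have hsplit : SingStep [(i, j)] [(p.1, 0), (i', j - 1)] := by
      have := SingStep.split p.1 i' (j - 1)
      have e1 : p.1 + i' + 1 = i := by omega
      have e2 : (j - 1) + 1 = j := by omega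
      rwa [e1, e2] at this
    -- shifts: [(p.1, 0), (i', j - 1)] →* [(p.1, p.2), (i', j')]
    have hshift : SingLE [(p.1, 0), (i', j - 1)] [(p.1, p.2), (i', j')] := by
      have := shifts p.1 i' j' p.2 0
      have e1 : j' + p.2 = j - 1 := by omega
      have e2 : 0 + p.2 = p.2 := by omega
      rwa [e1, e2] at this
    -- concat: [(p.1, p.2)] ++ [(i', j')] →* [(p.1,p.2)] ++ l'
    have hconcat : SingLE ([(p.1, p.2)] ++ [(i', j')] ++ []) ([(p.1, p.2)] ++ l' ++ []) :=
      SingLE.concat [(p.1, p.2)] [] ih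
    simp only [List.append_nil] at hconcat
    have hfinal : SingLE [(i, j)] (p :: l') := by
      refine ((Relation.ReflTransGen.single hsplit).trans hshift).trans ?_
      have : ([(p.1, p.2)] : List (ℕ × ℕ)) ++ l' = p :: l' := by simp
      rw [← this]
      exact hconcat
    exact hfinal

/-- For `2i ≤ d` and `k = ((i, d − 2i))` the order-1 Fibonacci index of degree
`d`, and any Fibonacci index `ℓ` of degree `d`: `k ≤ ℓ` in the singularity
partial order iff the word `(C,D)^ℓ` contains exactly `i` letters `D`. -/
theorem singLE_order_one_iff_count_D (d i : ℕ) (h : 2 * i ≤ d)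
    (l : List (ℕ × ℕ)) (hl : l ≠ []) (hdeg : degree l = d) :
    SingLE [(i, d - 2 * i)] l ↔ (cdWord l).count Letter.D = i := by
  have hcount := count_cdWord l hl
  have hlen : 1 ≤ l.length := List.length_pos_iff.mpr hl
  have hDegdeg : Deg l = degree l + 3 := by
    unfold Deg degree
    omega
  constructor
  · intro hle
    have h1 := hle.dsum
    have h2 : Dsum [(i, d - 2 * i)] = i + 1 := by simp [Dsum]
    omega
  · intro hc
    have h1 : Dsum l = i + 1 := by omega
    have h2 : Deg l = 2 * (i + 1) + (d - 2 * i) + 1 := by omega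
    exact build l hl i (d - 2 * i) h1 h2
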